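/- arXiv:math/0101227 — 2 statements merged into one kernel-verified Lean document; each statement's English description precedes it below -/
import Mathlib

section
/- (Kac–Krein) Let a be Borel measurable with a(x) > 0 on (0,∞) and set δ = sup_{x>0} x ∫_x^∞ a(u)^{-1} du; assume 0 < δ < ∞. Define λ₀ = inf { (∫_0^∞ f'(x)² dx) / (∫_0^∞ f(x)²/a(x) dx) : f absolutely continuous on [0,∞), f(0) = 0, 0 < ∫_0^∞ f²/a < ∞ }. Then (4δ)^{-1} ≤ λ₀ ≤ δ^{-1}. -/
open MeasureTheory Set Real

open scoped ENNReal

/-!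
The lower bound is a weighted Hardy inequality. Cauchy–Schwarz with the weight `√t` gives
`f(x)² ≤ 2√x ∫₀ˣ g(t)² √t dt`; exchanging the order of integration, it remains to show
`∫ₜ^∞ √x / a(x) dx ≤ 2δ/√t`, which follows from the tail bound `∫ₓ^∞ a⁻¹ ≤ δ/x` after writing
`√x = √t + ∫ₜˣ ds / (2√s)` and exchanging the order of integration once more.
For the upper bound, the test function `min x x₀` has Rayleigh quotient at most
`(x₀ ∫_{x₀}^∞ a⁻¹)⁻¹`.
-/

theorem Real.enorm_sq_eq_ofReal (x : ℝ) : ‖x‖ₑ ^ 2 = ENNReal.ofReal (x ^ 2) := by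
  rw [Real.enorm_eq_ofReal_abs, ← ENNReal.ofReal_pow (abs_nonneg x), sq_abs]

theorem sq_lintegral_mul_le {α : Type*} [MeasurableSpace α] (μ : Measure α) {F G : α → ℝ≥0∞}
    (hF : AEMeasurable F μ) (hG : AEMeasurable G μ) :
    (∫⁻ a, F a * G a ∂μ) ^ 2 ≤ (∫⁻ a, F a ^ 2 ∂μ) * ∫⁻ a, G a ^ 2 ∂μ := by
  have holder := ENNReal.lintegral_mul_le_Lp_mul_Lq μ Real.HolderConjugate.two_two hF hG
  simp only [Pi.mul_apply, ENNReal.rpow_two] at holder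
  calc (∫⁻ a, F a * G a ∂μ) ^ 2
      ≤ ((∫⁻ a, F a ^ 2 ∂μ) ^ (1 / 2 : ℝ) * (∫⁻ a, G a ^ 2 ∂μ) ^ (1 / 2 : ℝ)) ^ 2 := by
        gcongr
    _ = (∫⁻ a, F a ^ 2 ∂μ) * ∫⁻ a, G a ^ 2 ∂μ := by
        rw [mul_pow, ← ENNReal.rpow_natCast, ← ENNReal.rpow_natCast (_ ^ _), ← ENNReal.rpow_mul,
          ← ENNReal.rpow_mul]
        norm_num

theorem lintegral_Ioi_mul_lintegral_Ioc_comm (c : ℝ) {φ ψ : ℝ → ℝ≥0∞}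
    (hφ : AEMeasurable φ (volume.restrict (Ioi c)))
    (hψ : AEMeasurable ψ (volume.restrict (Ioi c))) :
    ∫⁻ x in Ioi c, ψ x * ∫⁻ s in Ioc c x, φ s = ∫⁻ s in Ioi c, φ s * ∫⁻ x in Ioi s, ψ x := by
  set F : ℝ → ℝ → ℝ≥0∞ := fun x s =>
    {p : ℝ × ℝ | p.2 < p.1}.indicator (fun p => ψ p.1 * φ p.2) (x, s)
  have hF : AEMeasurable (Function.uncurry F)
      ((volume.restrict (Ioi c)).prod (volume.restrict (Ioi c))) :=
    (hψ.comp_fst.mul hφ.comp_snd).indicator (measurableSet_lt measurable_snd measurable_fst)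
  have integral_in_s (x : ℝ) : ∫⁻ s in Ioi c, F x s = ψ x * ∫⁻ s in Ioc c x, φ s := by
    have : (fun s => F x s) = (Iio x).indicator (fun s => ψ x * φ s) := by
      ext s
      simp [F, indicator]
    rw [this, lintegral_indicator measurableSet_Iio, Measure.restrict_restrict measurableSet_Iio,
      inter_comm, Ioi_inter_Iio, Measure.restrict_congr_set Ioo_ae_eq_Ioc,
      lintegral_const_mul'' _ (hφ.mono_measure (Measure.restrict_mono Ioc_subset_Ioi_self le_rfl))]
  have integral_in_x (s : ℝ) (hs : c < s) : ∫⁻ x in Ioi c, F x s = φ s * ∫⁻ x in Ioi s, ψ x := by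
    have : (fun x => F x s) = (Ioi s).indicator (fun x => ψ x * φ s) := by
      ext x
      simp [F, indicator]
    rw [this, lintegral_indicator measurableSet_Ioi, Measure.restrict_restrict measurableSet_Ioi,
      Ioi_inter_Ioi, max_eq_left hs.le, mul_comm,
      lintegral_mul_const'' _
        (hψ.mono_measure (Measure.restrict_mono (Ioi_subset_Ioi hs.le) le_rfl))]
  calc ∫⁻ x in Ioi c, ψ x * ∫⁻ s in Ioc c x, φ s
      = ∫⁻ x in Ioi c, ∫⁻ s in Ioi c, F x s := by simp_rw [integral_in_s]
    _ = ∫⁻ s in Ioi c, ∫⁻ x in Ioi c, F x s := lintegral_lintegral_swap hF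
    _ = ∫⁻ s in Ioi c, φ s * ∫⁻ x in Ioi s, ψ x :=
        setLIntegral_congr_fun measurableSet_Ioi integral_in_x

theorem ofReal_rpow_half_eq_add_lintegral {t x : ℝ} (ht : 0 < t) (hx : t ≤ x) :
    ENNReal.ofReal (x ^ (1 / 2 : ℝ)) =
      ENNReal.ofReal (t ^ (1 / 2 : ℝ)) +
        ∫⁻ s in Ioc t x, ENNReal.ofReal (s ^ (-(1 / 2) : ℝ) / 2) := by
  have hderiv : ∫ s in t..x, s ^ (-(1 / 2) : ℝ) / 2 = x ^ (1 / 2 : ℝ) - t ^ (1 / 2 : ℝ) := by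
    rw [intervalIntegral.integral_div, integral_rpow (Or.inl (by norm_num))]
    norm_num
    ring
  have hmono : t ^ (1 / 2 : ℝ) ≤ x ^ (1 / 2 : ℝ) := Real.rpow_le_rpow ht.le hx (by norm_num)
  rw [← ofReal_integral_eq_lintegral_ofReal, ← intervalIntegral.integral_of_le hx, hderiv,
    ← ENNReal.ofReal_add (by positivity) (by linarith), add_sub_cancel]
  · exact ((intervalIntegral.intervalIntegrable_rpow' (by norm_num)).div_const 2).1
  · filter_upwards [ae_restrict_mem measurableSet_Ioc] with s hs
    have : 0 < s := ht.trans hs.1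
    positivity

theorem lintegral_Ioi_rpow_half_mul_le {w : ℝ → ℝ≥0∞} {δ : ℝ} (hδ : 0 ≤ δ) (hw_meas : Measurable w)
    (hw : ∀ x > 0, ∫⁻ u in Ioi x, w u ≤ ENNReal.ofReal (δ / x)) {t : ℝ} (ht : 0 < t) :
    ∫⁻ x in Ioi t, ENNReal.ofReal (x ^ (1 / 2 : ℝ)) * w x ≤
      ENNReal.ofReal (2 * δ * t ^ (-(1 / 2) : ℝ)) := by
  set φ : ℝ → ℝ≥0∞ := fun s => ENNReal.ofReal (s ^ (-(1 / 2) : ℝ) / 2)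
  have hsplit : ∫⁻ x in Ioi t, ENNReal.ofReal (x ^ (1 / 2 : ℝ)) * w x =
      ENNReal.ofReal (t ^ (1 / 2 : ℝ)) * (∫⁻ x in Ioi t, w x) +
        ∫⁻ s in Ioi t, φ s * ∫⁻ x in Ioi s, w x := by
    rw [← lintegral_Ioi_mul_lintegral_Ioc_comm t (by fun_prop) hw_meas.aemeasurable,
      ← lintegral_const_mul _ hw_meas, ← lintegral_add_left (by fun_prop)]
    refine setLIntegral_congr_fun measurableSet_Ioi fun x hx => ?_
    rw [ofReal_rpow_half_eq_add_lintegral ht (le_of_lt hx), add_mul, mul_comm (w x)]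
  have hinner : ∫⁻ s in Ioi t, φ s * ∫⁻ x in Ioi s, w x ≤
      ∫⁻ s in Ioi t, ENNReal.ofReal (δ / 2 * s ^ (-(3 / 2) : ℝ)) := by
    refine setLIntegral_mono' measurableSet_Ioi fun s hs => ?_
    have hs0 : 0 < s := ht.trans hs
    calc φ s * ∫⁻ x in Ioi s, w x ≤ φ s * ENNReal.ofReal (δ / s) := by gcongr; exact hw s hs0
      _ = ENNReal.ofReal (δ / 2 * s ^ (-(3 / 2) : ℝ)) := by
        rw [← ENNReal.ofReal_mul (by positivity), show (-(3 / 2) : ℝ) = -(1 / 2) + -1 by norm_num,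
          Real.rpow_add hs0, Real.rpow_neg_one]
        ring_nf
  have htail : ∫⁻ s in Ioi t, ENNReal.ofReal (δ / 2 * s ^ (-(3 / 2) : ℝ)) =
      ENNReal.ofReal (δ * t ^ (-(1 / 2) : ℝ)) := by
    rw [← ofReal_integral_eq_lintegral_ofReal
      ((integrableOn_Ioi_rpow_of_lt (by norm_num) ht).const_mul _), integral_const_mul,
      integral_Ioi_rpow_of_lt (by norm_num) ht]
    · norm_num
      ring_nf
    · filter_upwards [ae_restrict_mem measurableSet_Ioi] with s hs
      have : 0 < s := ht.trans hs
      positivity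
  have hfirst : ENNReal.ofReal (t ^ (1 / 2 : ℝ)) * ∫⁻ x in Ioi t, w x ≤
      ENNReal.ofReal (δ * t ^ (-(1 / 2) : ℝ)) := by
    calc ENNReal.ofReal (t ^ (1 / 2 : ℝ)) * ∫⁻ x in Ioi t, w x
        ≤ ENNReal.ofReal (t ^ (1 / 2 : ℝ)) * ENNReal.ofReal (δ / t) := by gcongr; exact hw t ht
      _ = ENNReal.ofReal (δ * t ^ (-(1 / 2) : ℝ)) := by
        rw [← ENNReal.ofReal_mul (by positivity), show (-(1 / 2) : ℝ) = 1 / 2 - 1 by norm_num,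
          Real.rpow_sub ht, Real.rpow_one]
        ring_nf
  rw [hsplit, two_mul, add_mul, ENNReal.ofReal_add (by positivity) (by positivity)]
  exact add_le_add hfirst (hinner.trans_eq htail)

theorem enorm_intervalIntegral_sq_le {g : ℝ → ℝ} {x : ℝ} (hx : 0 < x)
    (hg : IntervalIntegrable g volume 0 x) :
    ‖∫ t in 0..x, g t‖ₑ ^ 2 ≤
      ENNReal.ofReal (2 * x ^ (1 / 2 : ℝ)) *
        ∫⁻ t in Ioc 0 x, ‖g t‖ₑ ^ 2 * ENNReal.ofReal (t ^ (1 / 2 : ℝ)) := by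
  have hpos : ∀ᵐ t ∂volume.restrict (Ioc 0 x), 0 < t := by
    filter_upwards [ae_restrict_mem measurableSet_Ioc] with t ht using ht.1
  have hsplit : ∫⁻ t in Ioc 0 x, ‖g t‖ₑ =
      ∫⁻ t in Ioc 0 x, (‖g t‖ₑ * ENNReal.ofReal (t ^ (1 / 4 : ℝ))) *
        ENNReal.ofReal (t ^ (-(1 / 4) : ℝ)) := by
    refine lintegral_congr_ae (hpos.mono fun t ht => ?_)
    dsimp only
    rw [mul_assoc, ← ENNReal.ofReal_mul (by positivity), ← Real.rpow_add ht]
    norm_num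
  have hfirst : ∫⁻ t in Ioc 0 x, (‖g t‖ₑ * ENNReal.ofReal (t ^ (1 / 4 : ℝ))) ^ 2 =
      ∫⁻ t in Ioc 0 x, ‖g t‖ₑ ^ 2 * ENNReal.ofReal (t ^ (1 / 2 : ℝ)) := by
    refine lintegral_congr_ae (hpos.mono fun t ht => ?_)
    dsimp only
    rw [mul_pow, ← ENNReal.ofReal_pow (by positivity), ← Real.rpow_natCast, ← Real.rpow_mul ht.le]
    norm_num
  have hsecond : ∫⁻ t in Ioc 0 x, ENNReal.ofReal (t ^ (-(1 / 4) : ℝ)) ^ 2 =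
      ENNReal.ofReal (2 * x ^ (1 / 2 : ℝ)) := by
    have hpow : ∫⁻ t in Ioc 0 x, ENNReal.ofReal (t ^ (-(1 / 4) : ℝ)) ^ 2 =
        ∫⁻ t in Ioc 0 x, ENNReal.ofReal (t ^ (-(1 / 2) : ℝ)) := by
      refine lintegral_congr_ae (hpos.mono fun t ht => ?_)
      dsimp only
      rw [← ENNReal.ofReal_pow (by positivity), ← Real.rpow_natCast, ← Real.rpow_mul ht.le]
      norm_num
    rw [hpow, ← ofReal_integral_eq_lintegral_ofReal
      (intervalIntegral.intervalIntegrable_rpow' (by norm_num)).1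
      (hpos.mono fun t ht => by positivity), ← intervalIntegral.integral_of_le hx.le,
      integral_rpow (Or.inl (by norm_num)), Real.zero_rpow (by norm_num)]
    congr 1
    norm_num
    ring
  have hg_meas : AEMeasurable (fun t => ‖g t‖ₑ) (volume.restrict (Ioc 0 x)) :=
    hg.1.aestronglyMeasurable.enorm
  calc ‖∫ t in 0..x, g t‖ₑ ^ 2 ≤ (∫⁻ t in Ioc 0 x, ‖g t‖ₑ) ^ 2 := by
        rw [intervalIntegral.integral_of_le hx.le]
        gcongr
        exact enorm_integral_le_lintegral_enorm _
    _ ≤ (∫⁻ t in Ioc 0 x, ‖g t‖ₑ ^ 2 * ENNReal.ofReal (t ^ (1 / 2 : ℝ))) *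
          ENNReal.ofReal (2 * x ^ (1 / 2 : ℝ)) := by
        rw [hsplit, ← hfirst, ← hsecond]
        exact sq_lintegral_mul_le _ (by fun_prop) (by fun_prop)
    _ = _ := mul_comm _ _

theorem lintegral_enorm_primitive_sq_mul_le {w : ℝ → ℝ≥0∞} {δ : ℝ} (hδ : 0 ≤ δ)
    (hw_meas : Measurable w) (hw : ∀ x > 0, ∫⁻ u in Ioi x, w u ≤ ENNReal.ofReal (δ / x))
    {g : ℝ → ℝ} (hg : ∀ x > 0, IntervalIntegrable g volume 0 x) :
    ∫⁻ x in Ioi 0, ‖∫ t in 0..x, g t‖ₑ ^ 2 * w x ≤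
      ENNReal.ofReal (4 * δ) * ∫⁻ x in Ioi 0, ‖g x‖ₑ ^ 2 := by
  set φ : ℝ → ℝ≥0∞ := fun t => ‖g t‖ₑ ^ 2 * ENNReal.ofReal (t ^ (1 / 2 : ℝ))
  set ψ : ℝ → ℝ≥0∞ := fun x => ENNReal.ofReal (2 * x ^ (1 / 2 : ℝ)) * w x
  have hg_meas : AEMeasurable (fun t => ‖g t‖ₑ ^ 2) (volume.restrict (Ioi 0)) :=
    (aemeasurable_Ioi_of_forall_Ioc fun t ht =>
      (hg t ht).1.aestronglyMeasurable.enorm).pow_const 2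
  have hψ : ∀ t > 0, ∫⁻ x in Ioi t, ψ x ≤ ENNReal.ofReal (4 * δ * t ^ (-(1 / 2) : ℝ)) := by
    intro t ht
    calc ∫⁻ x in Ioi t, ψ x
        = ENNReal.ofReal 2 * ∫⁻ x in Ioi t, ENNReal.ofReal (x ^ (1 / 2 : ℝ)) * w x := by
          rw [← lintegral_const_mul _ (by fun_prop)]
          simp only [ψ, ENNReal.ofReal_mul zero_le_two, mul_assoc]
      _ ≤ ENNReal.ofReal 2 * ENNReal.ofReal (2 * δ * t ^ (-(1 / 2) : ℝ)) := by
          gcongr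
          exact lintegral_Ioi_rpow_half_mul_le hδ hw_meas hw ht
      _ = ENNReal.ofReal (4 * δ * t ^ (-(1 / 2) : ℝ)) := by
          rw [← ENNReal.ofReal_mul zero_le_two]
          ring_nf
  calc ∫⁻ x in Ioi 0, ‖∫ t in 0..x, g t‖ₑ ^ 2 * w x
      ≤ ∫⁻ x in Ioi 0, ψ x * ∫⁻ t in Ioc 0 x, φ t := by
        refine setLIntegral_mono' measurableSet_Ioi fun x (hx : 0 < x) => ?_
        calc ‖∫ t in 0..x, g t‖ₑ ^ 2 * w x
            ≤ (ENNReal.ofReal (2 * x ^ (1 / 2 : ℝ)) * ∫⁻ t in Ioc 0 x, φ t) * w x := by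
              gcongr
              exact enorm_intervalIntegral_sq_le hx (hg x hx)
          _ = ψ x * ∫⁻ t in Ioc 0 x, φ t := by ring
    _ = ∫⁻ t in Ioi 0, φ t * ∫⁻ x in Ioi t, ψ x :=
        lintegral_Ioi_mul_lintegral_Ioc_comm 0 (hg_meas.mul (by fun_prop)) (by fun_prop)
    _ ≤ ∫⁻ t in Ioi 0, ENNReal.ofReal (4 * δ) * ‖g t‖ₑ ^ 2 := by
        refine setLIntegral_mono' measurableSet_Ioi fun t (ht : 0 < t) => ?_
        calc φ t * ∫⁻ x in Ioi t, ψ x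
            ≤ ‖g t‖ₑ ^ 2 * ENNReal.ofReal (t ^ (1 / 2 : ℝ)) *
                ENNReal.ofReal (4 * δ * t ^ (-(1 / 2) : ℝ)) := by
              gcongr
              exact hψ t ht
          _ = ENNReal.ofReal (4 * δ) * ‖g t‖ₑ ^ 2 := by
              rw [mul_assoc, ← ENNReal.ofReal_mul (by positivity), mul_left_comm,
                ← Real.rpow_add ht]
              norm_num
              ring
    _ = ENNReal.ofReal (4 * δ) * ∫⁻ x in Ioi 0, ‖g x‖ₑ ^ 2 := lintegral_const_mul'' _ hg_meas

theorem intervalIntegral_indicator_Ioc_eq_min {x₀ x : ℝ} (hx₀ : 0 ≤ x₀) (hx : 0 ≤ x) :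
    ∫ t in 0..x, (Ioc 0 x₀).indicator (fun _ => (1 : ℝ)) t = min x x₀ := by
  rw [intervalIntegral.integral_of_le hx, setIntegral_indicator measurableSet_Ioc, Ioc_inter_Ioc,
    setIntegral_const, max_self, Real.volume_real_Ioc_of_le (le_min hx hx₀)]
  simp

section KacKrein

variable {a : ℝ → ℝ} {δ : ℝ}

theorem lintegral_Ioi_ofReal_inv_le (ha : ∀ x > 0, 0 < a x)
    (hInt : ∀ x > 0, IntegrableOn (fun u => (a u)⁻¹) (Ioi x))
    (htail : ∀ x > 0, x * ∫ u in Ioi x, (a u)⁻¹ ≤ δ) {x : ℝ} (hx : 0 < x) :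
    ∫⁻ u in Ioi x, ENNReal.ofReal (a u)⁻¹ ≤ ENNReal.ofReal (δ / x) := by
  rw [← ofReal_integral_eq_lintegral_ofReal (hInt x hx)]
  · exact ENNReal.ofReal_le_ofReal ((le_div_iff₀' hx).2 (htail x hx))
  · filter_upwards [ae_restrict_mem measurableSet_Ioi] with u hu
    exact (inv_pos.2 (ha u (hx.trans hu))).le

theorem lintegral_ofReal_sq_div_le (hma : Measurable a) (hδ : 0 ≤ δ)
    (htail : ∀ x > 0, ∫⁻ u in Ioi x, ENNReal.ofReal (a u)⁻¹ ≤ ENNReal.ofReal (δ / x))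
    {f g : ℝ → ℝ} (hg : ∀ x > 0, IntervalIntegrable g volume 0 x)
    (hf : ∀ x > 0, f x = ∫ t in 0..x, g t) (hg2 : IntegrableOn (fun x => g x ^ 2) (Ioi 0)) :
    ∫⁻ x in Ioi 0, ENNReal.ofReal (f x ^ 2 / a x) ≤
      ENNReal.ofReal (4 * δ * ∫ x in Ioi 0, g x ^ 2) := by
  calc ∫⁻ x in Ioi 0, ENNReal.ofReal (f x ^ 2 / a x)
      = ∫⁻ x in Ioi 0, ‖∫ t in 0..x, g t‖ₑ ^ 2 * ENNReal.ofReal (a x)⁻¹ := by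
        refine setLIntegral_congr_fun measurableSet_Ioi fun x (hx : 0 < x) => ?_
        rw [hf x hx, div_eq_mul_inv, ENNReal.ofReal_mul (sq_nonneg _), Real.enorm_sq_eq_ofReal]
    _ ≤ ENNReal.ofReal (4 * δ) * ∫⁻ x in Ioi 0, ‖g x‖ₑ ^ 2 :=
        lintegral_enorm_primitive_sq_mul_le hδ hma.inv.ennreal_ofReal htail hg
    _ = ENNReal.ofReal (4 * δ * ∫ x in Ioi 0, g x ^ 2) := by
        simp_rw [Real.enorm_sq_eq_ofReal]
        rw [← ofReal_integral_eq_lintegral_ofReal hg2 (ae_of_all _ fun x => sq_nonneg (g x)),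
          ← ENNReal.ofReal_mul (by positivity)]

def dirichletRayleighQuotients (a : ℝ → ℝ) : Set ℝ :=
  { r : ℝ | ∃ f g : ℝ → ℝ,
      (∀ x : ℝ, IntervalIntegrable g volume 0 x) ∧
      (∀ x ≥ (0:ℝ), f x = ∫ t in (0:ℝ)..x, g t) ∧
      IntegrableOn (fun x => f x ^ 2 / a x) (Ioi 0) ∧
      (0 < ∫ x in Ioi (0:ℝ), f x ^ 2 / a x) ∧
      IntegrableOn (fun x => g x ^ 2) (Ioi 0) ∧
      r = (∫ x in Ioi (0:ℝ), g x ^ 2) / ∫ x in Ioi (0:ℝ), f x ^ 2 / a x }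

theorem inv_four_mul_le_of_mem_dirichletRayleighQuotients (hma : Measurable a)
    (ha : ∀ x > 0, 0 < a x) (hδ : 0 < δ)
    (htail : ∀ x > 0, ∫⁻ u in Ioi x, ENNReal.ofReal (a u)⁻¹ ≤ ENNReal.ofReal (δ / x))
    {r : ℝ} (hr : r ∈ dirichletRayleighQuotients a) : (4 * δ)⁻¹ ≤ r := by
  obtain ⟨f, g, hg, hf, hfa, hpos, hg2, rfl⟩ := hr
  have hhardy := lintegral_ofReal_sq_div_le hma hδ.le htail (fun x _ => hg x)
    (fun x hx => hf x hx.le) hg2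
  rw [← ofReal_integral_eq_lintegral_ofReal hfa, ENNReal.ofReal_le_ofReal_iff (by positivity)]
    at hhardy
  · rw [le_div_iff₀ hpos, inv_mul_le_iff₀ (by positivity)]
    exact hhardy
  · filter_upwards [ae_restrict_mem measurableSet_Ioi] with x (hx : 0 < x)
    exact div_nonneg (sq_nonneg _) (ha x hx).le

theorem exists_mem_dirichletRayleighQuotients_le (hma : Measurable a) (ha : ∀ x > 0, 0 < a x)
    (hδ : 0 ≤ δ)
    (htail : ∀ x > 0, ∫⁻ u in Ioi x, ENNReal.ofReal (a u)⁻¹ ≤ ENNReal.ofReal (δ / x))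
    {x₀ : ℝ} (hx₀ : 0 < x₀) (hF : 0 < ∫ u in Ioi x₀, (a u)⁻¹) :
    ∃ r ∈ dirichletRayleighQuotients a, r ≤ (x₀ * ∫ u in Ioi x₀, (a u)⁻¹)⁻¹ := by
  set g : ℝ → ℝ := (Ioc 0 x₀).indicator fun _ => 1
  set f : ℝ → ℝ := fun x => min x x₀
  have hg_int : Integrable g :=
    (integrable_indicator_iff measurableSet_Ioc).2 (integrableOn_const measure_Ioc_lt_top.ne)
  have hg_sq : (fun x => g x ^ 2) = g := by
    ext x
    by_cases hx : x ∈ Ioc 0 x₀ <;> simp [g, hx]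
  have hf : ∀ x ≥ 0, f x = ∫ t in 0..x, g t := fun x hx =>
    (intervalIntegral_indicator_Ioc_eq_min hx₀.le hx).symm
  have hg_sq_int : IntegrableOn (fun x => g x ^ 2) (Ioi 0) := by
    rw [hg_sq]
    exact hg_int.integrableOn
  have hg_sq_integral : ∫ x in Ioi 0, g x ^ 2 = x₀ := by
    rw [hg_sq, setIntegral_indicator measurableSet_Ioc,
      inter_eq_self_of_subset_right Ioc_subset_Ioi_self, setIntegral_const,
      Real.volume_real_Ioc_of_le hx₀.le]
    simp
  have hnonneg : 0 ≤ᵐ[volume.restrict (Ioi 0)] fun x => f x ^ 2 / a x := by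
    filter_upwards [ae_restrict_mem measurableSet_Ioi] with x (hx : 0 < x)
    exact div_nonneg (sq_nonneg _) (ha x hx).le
  have hfa : IntegrableOn (fun x => f x ^ 2 / a x) (Ioi 0) := by
    refine ⟨(((continuous_id.min continuous_const).measurable.pow_const 2).div
      hma).aestronglyMeasurable, ?_⟩
    rw [hasFiniteIntegral_iff_ofReal hnonneg]
    exact (lintegral_ofReal_sq_div_le hma hδ htail (fun x _ => hg_int.intervalIntegrable)
      (fun x hx => hf x hx.le) hg_sq_int).trans_lt ENNReal.ofReal_lt_top
  have htail_eq : ∫ x in Ioi x₀, f x ^ 2 / a x = x₀ ^ 2 * ∫ u in Ioi x₀, (a u)⁻¹ := by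
    rw [← integral_const_mul]
    refine setIntegral_congr_fun measurableSet_Ioi fun x (hx : x₀ < x) => ?_
    simp [f, min_eq_right hx.le, div_eq_mul_inv]
  have hlow : x₀ ^ 2 * ∫ u in Ioi x₀, (a u)⁻¹ ≤ ∫ x in Ioi 0, f x ^ 2 / a x :=
    htail_eq ▸ setIntegral_mono_set hfa hnonneg (Ioi_subset_Ioi hx₀.le).eventuallyLE
  have hpos : 0 < ∫ x in Ioi 0, f x ^ 2 / a x := lt_of_lt_of_le (by positivity) hlow
  refine ⟨_, ⟨f, g, fun x => hg_int.intervalIntegrable, hf, hfa, hpos,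
    hg_sq_int, rfl⟩, ?_⟩
  calc (∫ x in Ioi 0, g x ^ 2) / ∫ x in Ioi 0, f x ^ 2 / a x
      ≤ x₀ / (x₀ ^ 2 * ∫ u in Ioi x₀, (a u)⁻¹) := by
        rw [hg_sq_integral]
        gcongr
    _ = (x₀ * ∫ u in Ioi x₀, (a u)⁻¹)⁻¹ := by
        field_simp

end KacKrein

/-- Kac & Krein (1958): for `L = a d²/dx²` on `[0,∞)` with Dirichlet boundary at `0`,
if `δ = sup_{x>0} x ∫_x^∞ a⁻¹` satisfies `0 < δ < ∞`, then `(4δ)⁻¹ ≤ λ₀ ≤ δ⁻¹`. -/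
theorem kac_krein_bounds
    (a : ℝ → ℝ) (hma : Measurable a) (ha : ∀ x > (0:ℝ), 0 < a x)
    (hInt : ∀ x > (0:ℝ), IntegrableOn (fun u => (a u)⁻¹) (Ioi x))
    (δ : ℝ)
    (hδ : δ = ⨆ x : {x : ℝ // 0 < x}, (x:ℝ) * ∫ u in Ioi (x:ℝ), (a u)⁻¹)
    (hδbdd : BddAbove (Set.range fun x : {x : ℝ // 0 < x} =>
      (x:ℝ) * ∫ u in Ioi (x:ℝ), (a u)⁻¹))
    (hδpos : 0 < δ)
    (lam0 : ℝ)
    (hlam0 : lam0 = sInf { r : ℝ | ∃ f g : ℝ → ℝ,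
      (∀ x : ℝ, IntervalIntegrable g volume 0 x) ∧
      (∀ x ≥ (0:ℝ), f x = ∫ t in (0:ℝ)..x, g t) ∧
      IntegrableOn (fun x => f x ^ 2 / a x) (Ioi 0) ∧
      (0 < ∫ x in Ioi (0:ℝ), f x ^ 2 / a x) ∧
      IntegrableOn (fun x => g x ^ 2) (Ioi 0) ∧
      r = (∫ x in Ioi (0:ℝ), g x ^ 2) / ∫ x in Ioi (0:ℝ), f x ^ 2 / a x }) :
    (4 * δ)⁻¹ ≤ lam0 ∧ lam0 ≤ δ⁻¹ := by
  change lam0 = sInf (dirichletRayleighQuotients a) at hlam0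
  subst hlam0
  have htail : ∀ x > 0, ∫⁻ u in Ioi x, ENNReal.ofReal (a u)⁻¹ ≤ ENNReal.ofReal (δ / x) :=
    fun x hx => lintegral_Ioi_ofReal_inv_le ha hInt (fun y hy => hδ ▸ le_ciSup hδbdd ⟨y, hy⟩) hx
  have hlower : ∀ r ∈ dirichletRayleighQuotients a, (4 * δ)⁻¹ ≤ r := fun r hr =>
    inv_four_mul_le_of_mem_dirichletRayleighQuotients hma ha hδpos htail hr
  have hquot : ∀ x : {x : ℝ // 0 < x}, 0 < (x : ℝ) * ∫ u in Ioi (x : ℝ), (a u)⁻¹ →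
      ∃ r ∈ dirichletRayleighQuotients a, r ≤ ((x : ℝ) * ∫ u in Ioi (x : ℝ), (a u)⁻¹)⁻¹ :=
    fun ⟨x, hx⟩ hxF => exists_mem_dirichletRayleighQuotients_le hma ha hδpos.le htail hx
      (pos_of_mul_pos_right hxF hx.le)
  obtain ⟨x₀, hx₀⟩ := exists_lt_of_lt_ciSup (hδ ▸ hδpos)
  obtain ⟨r₀, hr₀, -⟩ := hquot x₀ hx₀
  have hlam : (4 * δ)⁻¹ ≤ sInf (dirichletRayleighQuotients a) := le_csInf ⟨r₀, hr₀⟩ hlower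
  have hlam_pos : 0 < sInf (dirichletRayleighQuotients a) :=
    (inv_pos.2 (by positivity)).trans_le hlam
  refine ⟨hlam, (le_inv_comm₀ hlam_pos hδpos).2 ?_⟩
  have : Nonempty {x : ℝ // 0 < x} := ⟨x₀⟩
  rw [hδ]
  refine ciSup_le fun x => ?_
  rcases le_or_gt ((x : ℝ) * ∫ u in Ioi (x : ℝ), (a u)⁻¹) 0 with hxF | hxF
  · exact hxF.trans (inv_pos.2 hlam_pos).le
  · obtain ⟨r, hr, hle⟩ := hquot x hxF
    exact (le_inv_comm₀ hlam_pos hxF).1 ((csInf_le ⟨_, hlower⟩ hr).trans hle)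
end

section
/- (Hardy's inequality) Let p > 1 and let f : [0,∞) → ℝ be absolutely continuous with f(0) = 0 and f' ≥ 0 almost everywhere. Then ∫_0^∞ (f(x)/x)^p dx ≤ (p/(p−1))^p ∫_0^∞ f'(x)^p dx. -/
/-!
Write `q = p / (p - 1)` and `F x = ∫₀ˣ g`. Hölder's inequality on `(0, x]`, applied to
`g = (g t^{1/(pq)}) t^{-1/(pq)}`, gives `F(x)^p ≤ (q x^{1/q})^{p-1} ∫₀ˣ g(t)^p t^{1/q} dt`.
Dividing by `x^p`, integrating in `x` and swapping the integrals (Tonelli), the inner integral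
`∫ₜ^∞ x^{1/p-2} dx = q t^{-1/q}` cancels the weight `t^{1/q}`, which leaves `q^{p-1} · q ∫₀^∞ g^p`.
Working in `ℝ≥0∞` throughout, no integrability of `g^p` is needed.
-/

open MeasureTheory Set Real ENNReal

namespace ENNReal

variable {α : Type*} [MeasurableSpace α] {μ : Measure α} {p q : ℝ}

theorem lintegral_rpow_le_weighted (hpq : p.HolderConjugate q)
    {f w : α → ℝ≥0∞} (hf : AEMeasurable f μ) (hw : AEMeasurable w μ)
    (hw0 : ∀ᵐ a ∂μ, w a ≠ 0) (hw_top : ∀ᵐ a ∂μ, w a ≠ ∞) :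
    (∫⁻ a, f a ∂μ) ^ p ≤ (∫⁻ a, f a ^ p * w a ^ (p - 1) ∂μ) * (∫⁻ a, (w a)⁻¹ ∂μ) ^ (p - 1) := by
  have hsplit : ∫⁻ a, f a ∂μ = ∫⁻ a, (f a * w a ^ q⁻¹) * (w a)⁻¹ ^ q⁻¹ ∂μ := by
    refine lintegral_congr_ae ?_
    filter_upwards [hw0, hw_top] with a h0 h_top
    rw [mul_assoc, ← mul_rpow_of_nonneg _ _ hpq.symm.inv_nonneg,
      ENNReal.mul_inv_cancel h0 h_top, one_rpow, mul_one]
  have holder := lintegral_mul_le_Lp_mul_Lq μ hpq (hf.mul (hw.pow_const q⁻¹))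
    (hw.inv.pow_const q⁻¹)
  have hpow : ∀ a, (f a * w a ^ q⁻¹) ^ p = f a ^ p * w a ^ (p - 1) := fun a => by
    rw [mul_rpow_of_nonneg _ _ hpq.nonneg, ← rpow_mul, inv_mul_eq_div, hpq.div_conj_eq_sub_one]
  have hinv : ∀ a, ((w a)⁻¹ ^ q⁻¹) ^ q = (w a)⁻¹ := fun a => by
    rw [← rpow_mul, inv_mul_cancel₀ hpq.symm.ne_zero, rpow_one]
  calc (∫⁻ a, f a ∂μ) ^ p
      ≤ ((∫⁻ a, f a ^ p * w a ^ (p - 1) ∂μ) ^ (1 / p) * (∫⁻ a, (w a)⁻¹ ∂μ) ^ (1 / q)) ^ p := by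
        rw [hsplit]
        refine rpow_le_rpow ?_ hpq.nonneg
        simpa only [Pi.mul_apply, Pi.inv_apply, hpow, hinv] using holder
    _ = (∫⁻ a, f a ^ p * w a ^ (p - 1) ∂μ) * (∫⁻ a, (w a)⁻¹ ∂μ) ^ (p - 1) := by
        rw [mul_rpow_of_nonneg _ _ hpq.nonneg, ← rpow_mul, ← rpow_mul,
          one_div_mul_cancel hpq.ne_zero, rpow_one, one_div_mul_eq_div, hpq.div_conj_eq_sub_one]

end ENNReal

theorem lintegral_Ioc_ofReal_rpow {r x : ℝ} (hr : -1 < r) (hx : 0 ≤ x) :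
    ∫⁻ t in Ioc 0 x, ENNReal.ofReal t ^ r = ENNReal.ofReal (x ^ (r + 1) / (r + 1)) := by
  have hint : IntegrableOn (fun t : ℝ => t ^ r) (Ioc 0 x) :=
    (intervalIntegral.intervalIntegrable_rpow' hr).1
  have hint_eq := integral_rpow (a := 0) (b := x) (Or.inl hr)
  rw [zero_rpow (by linarith), sub_zero] at hint_eq
  rw [← hint_eq, intervalIntegral.integral_of_le hx,
    ofReal_integral_eq_lintegral_ofReal hint
      (ae_restrict_of_forall_mem measurableSet_Ioc fun t ht => rpow_nonneg ht.1.le r)]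
  exact setLIntegral_congr_fun measurableSet_Ioc fun t ht => ofReal_rpow_of_pos ht.1

theorem lintegral_Ici_ofReal_rpow {r t : ℝ} (hr : r < -1) (ht : 0 < t) :
    ∫⁻ x in Ici t, ENNReal.ofReal x ^ r = ENNReal.ofReal (t ^ (r + 1) / -(r + 1)) := by
  rw [← restrict_Ioi_eq_restrict_Ici, div_neg, ← neg_div, ← integral_Ioi_rpow_of_lt hr ht,
    ofReal_integral_eq_lintegral_ofReal (integrableOn_Ioi_rpow_of_lt hr ht)
      (ae_restrict_of_forall_mem measurableSet_Ioi fun x hx => rpow_nonneg (ht.trans hx).le r)]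
  exact setLIntegral_congr_fun measurableSet_Ioi fun x hx => ofReal_rpow_of_pos (ht.trans hx)

theorem lintegral_Ioi_mul_lintegral_Ioc_swap (μ : Measure ℝ) [SFinite μ] {a : ℝ}
    {h k : ℝ → ℝ≥0∞} (hh : AEMeasurable h (μ.restrict (Ioi a))) (hk : Measurable k) :
    ∫⁻ x in Ioi a, k x * ∫⁻ t in Ioc a x, h t ∂μ ∂μ =
      ∫⁻ t in Ioi a, h t * ∫⁻ x in Ici t, k x ∂μ ∂μ := by
  set F : ℝ → ℝ → ℝ≥0∞ := fun x t =>
    {z : ℝ × ℝ | z.2 ≤ z.1}.indicator (fun z => k z.1 * h z.2) (x, t)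
  have hF : AEMeasurable (Function.uncurry F) ((μ.restrict (Ioi a)).prod (μ.restrict (Ioi a))) :=
    ((hk.comp measurable_fst).aemeasurable.mul
      (hh.comp_quasiMeasurePreserving Measure.quasiMeasurePreserving_snd)).indicator
      (measurableSet_le measurable_snd measurable_fst)
  have hx : ∀ x, k x * ∫⁻ t in Ioc a x, h t ∂μ = ∫⁻ t in Ioi a, F x t ∂μ := fun x => by
    have : F x = (Iic x).indicator fun t => k x * h t := funext fun t => by
      simp [F, indicator_apply]
    rw [this, lintegral_indicator measurableSet_Iic, Measure.restrict_restrict measurableSet_Iic,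
      Iic_inter_Ioi, lintegral_const_mul'' _
        (hh.mono_measure (Measure.restrict_mono Ioc_subset_Ioi_self le_rfl))]
  have ht : ∀ t ∈ Ioi a, h t * ∫⁻ x in Ici t, k x ∂μ = ∫⁻ x in Ioi a, F x t ∂μ := fun t ht => by
    have : (F · t) = (Ici t).indicator fun x => k x * h t := funext fun x => by
      simp [F, indicator_apply]
    rw [this, lintegral_indicator measurableSet_Ici, Measure.restrict_restrict measurableSet_Ici,
      inter_eq_left.2 (Ici_subset_Ioi.2 ht), lintegral_mul_const _ hk, mul_comm]
  rw [setLIntegral_congr_fun measurableSet_Ioi ht]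
  simp_rw [hx]
  exact lintegral_lintegral_swap hF

section Hardy

variable {p q : ℝ}

theorem lintegral_Ioc_rpow_le_weighted (hpq : p.HolderConjugate q) {φ : ℝ → ℝ≥0∞} {x : ℝ}
    (hx : 0 ≤ x) (hφ : AEMeasurable φ (volume.restrict (Ioc 0 x))) :
    (∫⁻ t in Ioc 0 x, φ t) ^ p ≤
      (∫⁻ t in Ioc 0 x, φ t ^ p * ENNReal.ofReal t ^ q⁻¹) *
        ENNReal.ofReal (q * x ^ q⁻¹) ^ (p - 1) := by
  have hpos : ∀ᵐ t ∂volume.restrict (Ioc 0 x), 0 < t :=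
    ae_restrict_of_forall_mem measurableSet_Ioc fun t ht => ht.1
  have holder := ENNReal.lintegral_rpow_le_weighted hpq hφ
    (w := fun t => ENNReal.ofReal t ^ p⁻¹) (by fun_prop)
    (hpos.mono fun t ht => (rpow_pos_of_nonneg (ofReal_pos.2 ht) hpq.inv_nonneg).ne')
    (ae_of_all _ fun t => rpow_ne_top_of_nonneg hpq.inv_nonneg ofReal_ne_top)
  have hweight : ∀ t, (ENNReal.ofReal t ^ p⁻¹) ^ (p - 1) = ENNReal.ofReal t ^ q⁻¹ := fun t => by
    rw [← ENNReal.rpow_mul, ← hpq.one_sub_inv]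
    congr 1
    field_simp [hpq.ne_zero]
  have hdual : ∫⁻ t in Ioc 0 x, (ENNReal.ofReal t ^ p⁻¹)⁻¹ = ENNReal.ofReal (q * x ^ q⁻¹) := by
    simp_rw [← ENNReal.rpow_neg]
    rw [lintegral_Ioc_ofReal_rpow (by linarith [hpq.inv_add_inv_eq_one, hpq.symm.inv_pos]) hx,
      neg_add_eq_sub, hpq.one_sub_inv, div_inv_eq_mul, mul_comm]
  simpa only [hweight, hdual] using holder

theorem ofReal_intervalIntegral_div_rpow_le (hpq : p.HolderConjugate q) {g : ℝ → ℝ} {x : ℝ}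
    (hx : 0 < x) (hg_int : IntegrableOn g (Ioc 0 x)) (hg : 0 ≤ᵐ[volume.restrict (Ioc 0 x)] g) :
    ENNReal.ofReal (((∫ t in 0..x, g t) / x) ^ p) ≤
      ENNReal.ofReal q ^ (p - 1) * (ENNReal.ofReal x ^ (p⁻¹ - 2) *
        ∫⁻ t in Ioc 0 x, ENNReal.ofReal (g t) ^ p * ENNReal.ofReal t ^ q⁻¹) := by
  have hF : ENNReal.ofReal (∫ t in 0..x, g t) = ∫⁻ t in Ioc 0 x, ENNReal.ofReal (g t) := by
    rw [intervalIntegral.integral_of_le hx.le, ofReal_integral_eq_lintegral_ofReal hg_int hg]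
  have hF0 : 0 ≤ ∫ t in 0..x, g t := by
    rw [intervalIntegral.integral_of_le hx.le]
    exact integral_nonneg_of_ae hg
  have hexp : q⁻¹ * (p - 1) + -p = p⁻¹ - 2 := by
    rw [← hpq.one_sub_inv]
    field_simp [hpq.ne_zero]
    ring
  rw [← ofReal_rpow_of_nonneg (div_nonneg hF0 hx.le) hpq.nonneg, ofReal_div_of_pos hx,
    div_eq_mul_inv, mul_rpow_of_nonneg _ _ hpq.nonneg, hF, ENNReal.inv_rpow, ← ENNReal.rpow_neg]
  calc (∫⁻ t in Ioc 0 x, ENNReal.ofReal (g t)) ^ p * ENNReal.ofReal x ^ (-p)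
      ≤ (∫⁻ t in Ioc 0 x, ENNReal.ofReal (g t) ^ p * ENNReal.ofReal t ^ q⁻¹) *
          ENNReal.ofReal (q * x ^ q⁻¹) ^ (p - 1) * ENNReal.ofReal x ^ (-p) := by
        gcongr
        exact lintegral_Ioc_rpow_le_weighted hpq hx.le
          hg_int.aestronglyMeasurable.aemeasurable.ennreal_ofReal
    _ = _ := by
        rw [ofReal_mul hpq.symm.nonneg, mul_rpow_of_nonneg _ _ hpq.sub_one_pos.le,
          ← ofReal_rpow_of_pos hx, ← ENNReal.rpow_mul, ← hexp,
          ENNReal.rpow_add _ _ (ofReal_pos.2 hx).ne' ofReal_ne_top]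
        ring

theorem lintegral_Ioi_rpow_mul_lintegral_Ioc_weighted (hpq : p.HolderConjugate q)
    {φ : ℝ → ℝ≥0∞} (hφ : AEMeasurable φ (volume.restrict (Ioi 0))) :
    ∫⁻ x in Ioi 0, ENNReal.ofReal x ^ (p⁻¹ - 2) *
        ∫⁻ t in Ioc 0 x, φ t * ENNReal.ofReal t ^ q⁻¹ =
      ENNReal.ofReal q * ∫⁻ t in Ioi 0, φ t := by
  have hinner : ∀ t ∈ Ioi (0 : ℝ), φ t * ENNReal.ofReal t ^ q⁻¹ *
      ∫⁻ x in Ici t, ENNReal.ofReal x ^ (p⁻¹ - 2) = ENNReal.ofReal q * φ t := fun t (ht : 0 < t) => by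
    have hr : p⁻¹ - 2 + 1 = -q⁻¹ := by linarith [hpq.inv_sub_one]
    rw [lintegral_Ici_ofReal_rpow (by linarith [hpq.symm.inv_pos]) ht, hr, neg_neg,
      ofReal_rpow_of_pos ht, mul_assoc, ← ofReal_mul (by positivity), Real.rpow_neg ht.le,
      mul_div_assoc', mul_inv_cancel₀ (by positivity), one_div, inv_inv, mul_comm]
  rw [lintegral_Ioi_mul_lintegral_Ioc_swap volume (by fun_prop) (by fun_prop),
    setLIntegral_congr_fun measurableSet_Ioi hinner, lintegral_const_mul' _ _ ofReal_ne_top]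

end Hardy

/-- Hardy (1920): for `p > 1` and `f` absolutely continuous on `[0,∞)` with
`f(0) = 0` and `f' ≥ 0` a.e., one has
`∫_0^∞ (f(x)/x)^p dx ≤ (p/(p-1))^p ∫_0^∞ f'(x)^p dx`. -/
theorem hardy_inequality
    (p : ℝ) (hp : 1 < p)
    (f g : ℝ → ℝ)
    (hgloc : ∀ x : ℝ, IntervalIntegrable g volume 0 x)
    (hf : ∀ x ≥ (0:ℝ), f x = ∫ t in (0:ℝ)..x, g t)
    (hg : ∀ᵐ x ∂(volume.restrict (Ioi (0:ℝ))), 0 ≤ g x) :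
    (∫⁻ x in Ioi (0:ℝ), ENNReal.ofReal ((f x / x) ^ p)) ≤
      ENNReal.ofReal ((p / (p - 1)) ^ p) *
        ∫⁻ x in Ioi (0:ℝ), ENNReal.ofReal (g x ^ p) := by
  set q := p / (p - 1)
  have hpq : p.HolderConjugate q := .conjExponent hp
  have hg_meas : AEMeasurable g (volume.restrict (Ioi 0)) :=
    aemeasurable_Ioi_of_forall_Ioc fun x _ => (hgloc x).1.aestronglyMeasurable.aemeasurable
  have hg_pow : ∫⁻ t in Ioi 0, ENNReal.ofReal (g t) ^ p = ∫⁻ t in Ioi 0, ENNReal.ofReal (g t ^ p) :=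
    lintegral_congr_ae (hg.mono fun t hgt => ofReal_rpow_of_nonneg hgt hpq.nonneg)
  have hconst : ENNReal.ofReal q ^ (p - 1) * ENNReal.ofReal q = ENNReal.ofReal (q ^ p) := by
    rw [ofReal_rpow_of_nonneg hpq.symm.nonneg hpq.sub_one_pos.le, ← ofReal_mul (by positivity),
      ← Real.rpow_add_one hpq.symm.ne_zero, sub_add_cancel]
  calc ∫⁻ x in Ioi 0, ENNReal.ofReal ((f x / x) ^ p)
      ≤ ∫⁻ x in Ioi 0, ENNReal.ofReal q ^ (p - 1) * (ENNReal.ofReal x ^ (p⁻¹ - 2) *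
          ∫⁻ t in Ioc 0 x, ENNReal.ofReal (g t) ^ p * ENNReal.ofReal t ^ q⁻¹) :=
        setLIntegral_mono' measurableSet_Ioi fun x hx => by
          rw [hf x hx.le]
          exact ofReal_intervalIntegral_div_rpow_le hpq hx (hgloc x).1
            (ae_restrict_of_ae_restrict_of_subset Ioc_subset_Ioi_self hg)
    _ = ENNReal.ofReal (q ^ p) * ∫⁻ t in Ioi 0, ENNReal.ofReal (g t ^ p) := by
        rw [lintegral_const_mul' _ _ (rpow_ne_top_of_nonneg hpq.sub_one_pos.le ofReal_ne_top),
          lintegral_Ioi_rpow_mul_lintegral_Ioc_weighted hpq (by fun_prop), ← mul_assoc, hconst,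
          hg_pow]
end
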